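/- arXiv:0802.1578 — 2 statements merged into one kernel-verified Lean document; each statement's English description precedes it below -/
import Mathlib

section
/- If two closed PGA terms are derivably equal from the axioms PGA1–PGA4, then they denote the same instruction sequence (soundness of the PGA axioms for instruction sequence equivalence). -/
/-- Primitive instructions of PGA over a set `B` of basic instructions. -/
inductive PrimInstr (B : Type) : Type where
  | basic : B → PrimInstr B      -- plain basic instruction a
  | postest : B → PrimInstr B    -- positive test instruction +a
  | negtest : B → PrimInstr B    -- negative test instruction −a
  | jump : ℕ → PrimInstr B       -- forward jump instruction #l
  | halt : PrimInstr B           -- termination instruction !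

/-- Closed PGA terms over a type `I` of (primitive) instructions. -/
inductive PGA (I : Type) : Type where
  | instr : I → PGA I
  | concat : PGA I → PGA I → PGA I
  | rep : PGA I → PGA I

namespace PGA

/-- `P.pow n` is the (n+1)-fold repetition `P^(n+1)`. -/
def pow {I : Type} (P : PGA I) : ℕ → PGA I
  | 0 => P
  | n + 1 => .concat P (P.pow n)

/-- Derivable equality of closed PGA terms from the axioms PGA1–PGA4 by
equational logic. -/
inductive Eq {I : Type} : PGA I → PGA I → Prop where
  | refl (x : PGA I) : Eq x x
  | symm {x y : PGA I} : Eq x y → Eq y x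
  | trans {x y z : PGA I} : Eq x y → Eq y z → Eq x z
  | concat_congr {x x' y y' : PGA I} :
      Eq x x' → Eq y y' → Eq (.concat x y) (.concat x' y')
  | rep_congr {x y : PGA I} : Eq x y → Eq (.rep x) (.rep y)
  | pga1 (x y z : PGA I) : Eq (.concat (.concat x y) z) (.concat x (.concat y z))
  | pga2 (x : PGA I) (n : ℕ) : Eq (.rep (x.pow n)) (.rep x)
  | pga3 (x y : PGA I) : Eq (.concat (.rep x) y) (.rep x)
  | pga4 (x y : PGA I) : Eq (.rep (.concat x y)) (.concat x (.rep (.concat y x)))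


end PGA

/-- An instruction sequence: a non-empty finite sequence (list) or an infinite
sequence (function on ℕ) of instructions. -/
def InstrSeq (I : Type) : Type := List I ⊕ (ℕ → I)

namespace PGA

/-- The instruction sequence denoted by a closed PGA term: an instruction
constant denotes the one-element sequence; `P ; Q` denotes the denotation of
`P` if that is infinite and otherwise the concatenation of the denotations;
`P^ω` denotes the denotation of `P` if that is infinite and otherwise the
infinite sequence repeating the (non-empty) finite denotation of `P`. -/
def den {I : Type} : PGA I → InstrSeq I
  | .instr u => Sum.inl [u]
  | .concat P Q =>
    match P.den with
    | Sum.inl l =>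
      match Q.den with
      | Sum.inl l' => Sum.inl (l ++ l')
      | Sum.inr f => Sum.inr (fun n => if n < l.length then l.getD n (f 0) else f (n - l.length))
    | Sum.inr f => Sum.inr f
  | .rep P =>
    match P.den with
    | Sum.inl [] => Sum.inl []   -- never happens: denotations are non-empty
    | Sum.inl (a :: l) => Sum.inr (fun n => (a :: l).getD (n % (a :: l).length) a)
    | Sum.inr f => Sum.inr f

end PGA

/-!
Interpret `;` and `ω` on instruction sequences: `append` concatenates (an infinite left
operand absorbs the right one) and `cycle` repeats a non-empty finite sequence forever.
The denotation commutes with these operations, so the axioms only need to hold for them.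
PGA1 is associativity of `append` and PGA3 holds because cycles are infinite. For PGA2 and
PGA4 the key fact is that, for non-empty `x`, `cycle x` is the unique `s` with
`append x s = s`: both `(x^n)^ω` and `x^ω` solve this equation for `x^n`, and
`x ; (y ; x)^ω` solves it for `x ; y`.
-/

namespace Stream'

variable {α : Type*}

theorem eq_of_append_stream_eq_self {l : List α} (hl : l ≠ []) {s t : Stream' α}
    (hs : l ++ₛ s = s) (ht : l ++ₛ t = t) : s = t := by
  ext n
  induction n using Nat.strong_induction_on with
  | _ n ih =>
    rcases lt_or_ge n l.length with hn | hn
    · rw [← hs, ← ht, get_append_left _ _ _ hn, get_append_left _ _ _ hn]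
    · obtain ⟨m, rfl⟩ := Nat.exists_eq_add_of_le hn
      have hm : m < l.length + m := by
        have := List.length_pos_iff.mpr hl
        omega
      rw [← hs, ← ht, get_append_right, get_append_right, ih m hm]

theorem get_cycle (l : List α) (hl : l ≠ []) (n : ℕ) :
    (cycle l hl).get n = l[n % l.length]'(Nat.mod_lt _ (List.length_pos_iff.mpr hl)) := by
  induction n using Nat.strong_induction_on with
  | _ n ih =>
    rw [cycle_eq]
    rcases lt_or_ge n l.length with hn | hn
    · simp only [get_append_left _ _ _ hn, Nat.mod_eq_of_lt hn]
    · obtain ⟨m, rfl⟩ := Nat.exists_eq_add_of_le hn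
      have hm : m < l.length + m := by
        have := List.length_pos_iff.mpr hl
        omega
      simp only [get_append_right, ih m hm, Nat.add_mod_left]

end Stream'

namespace InstrSeq

variable {I : Type}

def append : InstrSeq I → InstrSeq I → InstrSeq I
  | .inl l, .inl l' => .inl (l ++ l')
  | .inl l, .inr s => .inr (l ++ₛ s)
  | .inr s, _ => .inr s

def cycle : InstrSeq I → InstrSeq I
  | .inl [] => .inl []
  | .inl (a :: l) => .inr (Stream'.cycle (a :: l) (List.cons_ne_nil a l))
  | .inr s => .inr s

theorem append_assoc (x y z : InstrSeq I) :
    append (append x y) z = append x (append y z) := by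
  rcases x with l | s
  · rcases y with l' | s'
    · rcases z with l'' | s''
      · exact congrArg Sum.inl (List.append_assoc l l' l'')
      · exact congrArg Sum.inr (Stream'.append_append_stream l l' s'')
    · rfl
  · rfl

theorem append_eq_nil_iff {x y : InstrSeq I} :
    append x y = .inl [] ↔ x = .inl [] ∧ y = .inl [] := by
  rcases x with l | s
  · rcases y with l' | s' <;> simp [append, InstrSeq]
  · simp [append, InstrSeq]

theorem cycle_ne_nil {x : InstrSeq I} (hx : x ≠ .inl []) : cycle x ≠ .inl [] := by
  rcases x with (_ | _) | _
  · exact absurd rfl hx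
  all_goals simp [cycle, InstrSeq]

theorem cycle_append {x : InstrSeq I} (hx : x ≠ .inl []) (y : InstrSeq I) :
    append (cycle x) y = cycle x := by
  rcases x with (_ | _) | _
  · exact absurd rfl hx
  all_goals rfl

theorem append_cycle {x : InstrSeq I} (hx : x ≠ .inl []) : append x (cycle x) = cycle x := by
  rcases x with (_ | ⟨a, l⟩) | s
  · exact absurd rfl hx
  · exact congrArg Sum.inr (Stream'.cycle_eq _ _).symm
  · rfl

theorem eq_of_append_eq_self {x s t : InstrSeq I} (hx : x ≠ .inl [])
    (hs : append x s = s) (ht : append x t = t) : s = t := by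
  rcases x with l | x
  · have hl : l ≠ [] := fun h => hx (congrArg Sum.inl h)
    rcases s with m | s
    · exact absurd (List.append_left_eq_self.mp (Sum.inl.inj hs)) hl
    rcases t with m | t
    · exact absurd (List.append_left_eq_self.mp (Sum.inl.inj ht)) hl
    exact congrArg Sum.inr
      (Stream'.eq_of_append_stream_eq_self hl (Sum.inr.inj hs) (Sum.inr.inj ht))
  · exact hs.symm.trans ht

theorem cycle_eq_of_append_eq_self {x s : InstrSeq I} (hx : x ≠ .inl [])
    (hs : append x s = s) : cycle x = s :=
  eq_of_append_eq_self hx (append_cycle hx) hs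

theorem cycle_append_eq_append_cycle {x : InstrSeq I} (hx : x ≠ .inl []) (y : InstrSeq I) :
    cycle (append x y) = append x (cycle (append y x)) := by
  have hxy : append x y ≠ .inl [] := fun h => hx (append_eq_nil_iff.mp h).1
  have hyx : append y x ≠ .inl [] := fun h => hx (append_eq_nil_iff.mp h).2
  refine cycle_eq_of_append_eq_self hxy ?_
  rw [append_assoc, ← append_assoc y, append_cycle hyx]

end InstrSeq

namespace PGA

variable {I : Type}

theorem den_concat (P Q : PGA I) : (concat P Q).den = InstrSeq.append P.den Q.den := by
  rw [den]
  rcases P.den with l | s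
  -- typing `t` as a stream lets the `Stream'` lemmas rewrite under it
  · rcases Q.den with l' | (t : Stream' I)
    · rfl
    · refine congrArg Sum.inr (Stream'.ext fun n => ?_)
      rcases lt_or_ge n l.length with hn | hn
      · rw [Stream'.get_append_left _ _ _ hn]
        exact (if_pos hn).trans (List.getD_eq_getElem _ _ hn)
      · obtain ⟨m, rfl⟩ := Nat.exists_eq_add_of_le hn
        rw [Stream'.get_append_right]
        exact (if_neg (by omega)).trans (congrArg t (by omega))
  · rfl

theorem den_rep (P : PGA I) : (rep P).den = InstrSeq.cycle P.den := by
  rw [den]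
  rcases P.den with (_ | ⟨a, l⟩) | _
  · rfl
  · refine congrArg Sum.inr (Stream'.ext fun n => ?_)
    rw [Stream'.get_cycle, ← List.getD_eq_getElem]
    rfl
  · rfl

theorem den_ne_nil (P : PGA I) : P.den ≠ .inl [] := by
  induction P with
  | instr u => simp [den, InstrSeq]
  | concat P Q ihP _ =>
    exact fun h => ihP (InstrSeq.append_eq_nil_iff.mp (den_concat P Q ▸ h)).1
  | rep P ihP =>
    exact den_rep P ▸ InstrSeq.cycle_ne_nil ihP

theorem den_pow_append_cycle (P : PGA I) (n : ℕ) :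
    InstrSeq.append (P.pow n).den (InstrSeq.cycle P.den) = InstrSeq.cycle P.den := by
  induction n with
  | zero => exact InstrSeq.append_cycle (den_ne_nil P)
  | succ n ih =>
    rw [pow, den_concat, InstrSeq.append_assoc, ih, InstrSeq.append_cycle (den_ne_nil P)]

end PGA

/-- Soundness of the PGA axioms for instruction sequence
equivalence: if two closed PGA terms are derivably equal from PGA1–PGA4, then
they denote the same instruction sequence. -/
theorem pga_soundness (B : Type) (x y : PGA (PrimInstr B)) :
    PGA.Eq x y → x.den = y.den := by
  intro h
  induction h with
  | refl => rfl
  | symm _ ih => exact ih.symm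
  | trans _ _ ih₁ ih₂ => exact ih₁.trans ih₂
  | concat_congr _ _ ih₁ ih₂ => rw [PGA.den_concat, PGA.den_concat, ih₁, ih₂]
  | rep_congr _ ih => rw [PGA.den_rep, PGA.den_rep, ih]
  | pga1 => simp only [PGA.den_concat, InstrSeq.append_assoc]
  | pga2 x n =>
    rw [PGA.den_rep, PGA.den_rep]
    exact InstrSeq.cycle_eq_of_append_eq_self (PGA.den_ne_nil _) (PGA.den_pow_append_cycle x n)
  | pga3 x => rw [PGA.den_concat, PGA.den_rep, InstrSeq.cycle_append (PGA.den_ne_nil x)]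
  | pga4 x y =>
    simp only [PGA.den_concat, PGA.den_rep]
    exact InstrSeq.cycle_append_eq_append_cycle (PGA.den_ne_nil x) _
end

section
/- If two closed PGA terms denote the same instruction sequence, then they are derivably equal from the axioms PGA1–PGA4 (completeness of the PGA axioms for instruction sequence equivalence). -/
set_option linter.unusedSectionVars false

/- ====================  auxiliary development  ==================== -/

namespace PGACompl

variable {I : Type} [Inhabited I]

/-- Term encoding a non-empty list of instructions. -/
def ofL : List I → PGA I
  | [] => .instr default
  | [a] => .instr a
  | a :: b :: l => .concat (.instr a) (ofL (b :: l))

/-- Term encoding `l ; p^ω`. -/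
def trm : List I → List I → PGA I
  | [], p => .rep (ofL p)
  | l@(_ :: _), p => .concat (ofL l) (.rep (ofL p))

/-- The eventually-periodic function described by prefix `l` and period `p`. -/
def ev (l p : List I) (n : ℕ) : I :=
  if n < l.length then l.getD n default
  else p.getD ((n - l.length) % p.length) default

/-- `lpow p k = p^(k+1)` as a list. -/
def lpow (p : List I) : ℕ → List I
  | 0 => p
  | k + 1 => p ++ lpow p k

lemma getD_irrel (l : List I) (d d' : I) {i : ℕ} (h : i < l.length) :
    l.getD i d = l.getD i d' := by
  rw [List.getD_eq_getElem l d h, List.getD_eq_getElem l d' h]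

/- ====================  derivable-equality lemmas  ==================== -/

lemma ofL_append (l1 l2 : List I) (h1 : l1 ≠ []) (h2 : l2 ≠ []) :
    PGA.Eq (ofL (l1 ++ l2)) (.concat (ofL l1) (ofL l2)) := by
  induction l1 with
  | nil => simp at h1
  | cons a l ih =>
    cases l with
    | nil =>
      cases l2 with
      | nil => simp at h2
      | cons b l2' => exact PGA.Eq.refl _
    | cons b l' =>
      have h := ih (by simp)
      exact .trans (.concat_congr (.refl (.instr a)) h) (.symm (.pga1 _ _ _))

lemma rep_rep (x : PGA I) : PGA.Eq (.rep (.rep x)) (.rep x) :=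
  .trans (.rep_congr (.symm (.pga3 x x)))
    (.trans (.pga4 (.rep x) x) (.pga3 _ _))

lemma rep_concat_rep (x y : PGA I) :
    PGA.Eq (.rep (.concat x (.rep y))) (.concat x (.rep y)) :=
  .trans (.pga4 x (.rep y))
    (.concat_congr (.refl x) (.trans (.rep_congr (.pga3 y x)) (rep_rep y)))

lemma rep_unfold (x : PGA I) : PGA.Eq (.rep x) (.concat x (.rep x)) :=
  .trans (.symm (.pga2 x 1))
    (.trans (.pga4 x x) (.concat_congr (.refl x) (.pga2 x 1)))

lemma rep_cons (a : I) (q : List I) :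
    PGA.Eq (.rep (ofL (a :: q))) (.concat (.instr a) (.rep (ofL (q ++ [a])))) := by
  cases q with
  | nil => exact rep_unfold (.instr a)
  | cons b q' =>
    exact .trans (.pga4 (.instr a) (ofL (b :: q')))
      (.concat_congr (.refl _)
        (.rep_congr (.symm (ofL_append (b :: q') [a] (by simp) (by simp)))))

lemma trm_shift (l : List I) (a : I) (q : List I) :
    PGA.Eq (trm l (a :: q)) (trm (l ++ [a]) (q ++ [a])) := by
  cases l with
  | nil => exact rep_cons a q
  | cons b l' =>
    refine .trans (.concat_congr (.refl (ofL (b :: l'))) (rep_cons a q)) ?_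
    refine .trans (.symm (.pga1 _ _ _)) ?_
    exact .concat_congr (.symm (ofL_append (b :: l') [a] (by simp) (by simp))) (.refl _)

lemma trm_absorb (l p : List I) (y : PGA I) :
    PGA.Eq (.concat (trm l p) y) (trm l p) := by
  cases l with
  | nil => exact .pga3 _ _
  | cons b l' =>
    exact .trans (.pga1 _ _ _) (.concat_congr (.refl _) (.pga3 _ _))

lemma trm_prepend (l1 l2 p : List I) (h1 : l1 ≠ []) :
    PGA.Eq (.concat (ofL l1) (trm l2 p)) (trm (l1 ++ l2) p) := by
  obtain ⟨a, l1', rfl⟩ : ∃ a l1', l1 = a :: l1' := by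
    cases l1 with
    | nil => simp at h1
    | cons a t => exact ⟨a, t, rfl⟩
  cases l2 with
  | nil => simp [trm]; exact .refl _
  | cons c l2' =>
    refine .trans (.symm (.pga1 _ _ _)) ?_
    exact .concat_congr (.symm (ofL_append (a :: l1') (c :: l2') (by simp) (by simp))) (.refl _)

lemma rep_trm (l p : List I) : PGA.Eq (.rep (trm l p)) (trm l p) := by
  cases l with
  | nil => exact rep_rep _
  | cons b l' => exact rep_concat_rep _ _

lemma lpow_ne_nil (p : List I) (hp : p ≠ []) (k : ℕ) : lpow p k ≠ [] := by
  cases k with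
  | zero => exact hp
  | succ k => simp [lpow, hp]

lemma ofL_lpow (p : List I) (hp : p ≠ []) (k : ℕ) :
    PGA.Eq (ofL (lpow p k)) ((ofL p).pow k) := by
  induction k with
  | zero => exact .refl _
  | succ k ih =>
    exact .trans (ofL_append p (lpow p k) hp (lpow_ne_nil p hp k))
      (.concat_congr (.refl _) ih)

lemma trm_pump (l p : List I) (hp : p ≠ []) (k : ℕ) :
    PGA.Eq (trm l (lpow p k)) (trm l p) := by
  have hr : PGA.Eq (.rep (ofL (lpow p k))) (.rep (ofL p)) :=
    .trans (.rep_congr (ofL_lpow p hp k)) (.pga2 _ _)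
  cases l with
  | nil => exact hr
  | cons b l' => exact .concat_congr (.refl _) hr

/- ====================  semantic lemmas  ==================== -/

lemma ev_append (l1 l2 p : List I) (d : I) (n : ℕ) :
    (if n < l1.length then l1.getD n d else ev l2 p (n - l1.length))
      = ev (l1 ++ l2) p n := by
  unfold ev
  by_cases h1 : n < l1.length
  · have h : n < (l1 ++ l2).length := by simp; omega
    simp only [if_pos h1, if_pos h]
    rw [List.getD_eq_getElem _ d h1, List.getD_eq_getElem _ _ h]
    exact (List.getElem_append_left h1).symm
  · simp only [if_neg h1]
    by_cases h2 : n - l1.length < l2.length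
    · have h : n < (l1 ++ l2).length := by simp; omega
      simp only [if_pos h2, if_pos h]
      rw [List.getD_eq_getElem _ _ h2, List.getD_eq_getElem _ _ h]
      rw [List.getElem_append_right (by omega)]
    · have h : ¬ n < (l1 ++ l2).length := by simp; omega
      simp only [if_neg h2, if_neg h]
      have he : n - l1.length - l2.length = n - (l1 ++ l2).length := by simp; omega
      rw [he]

lemma getD_rot (a : I) (q : List I) (n : ℕ) :
    (a :: q).getD ((n + 1) % (q.length + 1)) default
      = (q ++ [a]).getD (n % (q.length + 1)) default := by
  set m := q.length + 1 with hm
  have hr : n % m < m := Nat.mod_lt _ (by omega)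
  have hn := Nat.div_add_mod n m
  by_cases h : n % m = q.length
  · have h1 : (n + 1) % m = 0 := by
      have hh : n + 1 = m * (n / m + 1) := by rw [Nat.mul_succ]; omega
      rw [hh, Nat.mul_mod_right]
    rw [h1, h]
    have : (q ++ [a]).getD q.length default = a := by
      rw [List.getD_eq_getElem _ _ (by simp)]
      rw [List.getElem_append_right (le_refl _)]
      simp
    rw [this]
    rfl
  · have h1 : (n + 1) % m = n % m + 1 := by
      conv_lhs => rw [show n + 1 = (n % m + 1) + m * (n / m) by omega]
      rw [Nat.add_mul_mod_self_left]
      exact Nat.mod_eq_of_lt (by omega)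
    rw [h1]
    have hq : n % m < q.length := by omega
    rw [List.getD_eq_getElem _ _ (by simp; omega), List.getD_eq_getElem _ _ (by simp; omega)]
    simp only [List.getElem_cons_succ]
    exact (List.getElem_append_left hq).symm

lemma ev_shift (l : List I) (a : I) (q : List I) :
    ev l (a :: q) = ev (l ++ [a]) (q ++ [a]) := by
  funext n
  unfold ev
  rcases lt_trichotomy n l.length with h | h | h
  · have h' : n < (l ++ [a]).length := by simp; omega
    simp only [if_pos h, if_pos h']
    rw [List.getD_eq_getElem _ _ h, List.getD_eq_getElem _ _ h']
    exact (List.getElem_append_left h).symm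
  · have h' : n < (l ++ [a]).length := by simp; omega
    simp only [if_neg (by omega : ¬ n < l.length), if_pos h']
    subst h
    rw [List.getD_eq_getElem _ _ h']
    rw [List.getElem_append_right (le_refl _)]
    simp
  · have h' : ¬ n < (l ++ [a]).length := by simp; omega
    simp only [if_neg (by omega : ¬ n < l.length), if_neg h']
    have hlen : (l ++ [a]).length = l.length + 1 := by simp
    rw [hlen]
    have hd : n - l.length = (n - (l.length + 1)) + 1 := by omega
    rw [hd]
    have := getD_rot a q (n - (l.length + 1))
    simpa using this

lemma lpow_length (p : List I) (k : ℕ) : (lpow p k).length = (k + 1) * p.length := by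
  induction k with
  | zero => simp [lpow]
  | succ k ih => simp [lpow, ih]; ring

lemma getD_lpow (p : List I) (hp : p ≠ []) (k i : ℕ) (hi : i < (lpow p k).length) :
    (lpow p k).getD i default = p.getD (i % p.length) default := by
  induction k generalizing i with
  | zero =>
    simp [lpow] at hi ⊢
    rw [Nat.mod_eq_of_lt hi]
  | succ k ih =>
    simp only [lpow]
    by_cases h : i < p.length
    · rw [List.getD_eq_getElem _ _ (by simp [lpow] at hi ⊢; omega)]
      rw [List.getElem_append_left h]
      rw [Nat.mod_eq_of_lt h]
      exact (List.getD_eq_getElem _ _ h).symm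
    · have hi' : i - p.length < (lpow p k).length := by
        simp [lpow, List.length_append] at hi; omega
      rw [List.getD_eq_getElem _ _ (by simp [lpow] at hi ⊢; omega)]
      rw [List.getElem_append_right (by omega)]
      rw [← List.getD_eq_getElem _ default hi']
      rw [ih _ hi']
      congr 1
      conv_rhs => rw [← Nat.sub_add_cancel (by omega : p.length ≤ i)]
      rw [Nat.add_mod_right]

lemma ev_lpow (l p : List I) (hp : p ≠ []) (k : ℕ) :
    ev l (lpow p k) = ev l p := by
  funext n
  unfold ev
  by_cases h : n < l.length
  · simp [h]
  · simp only [if_neg h]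
    have hm : 0 < p.length := List.length_pos_iff.mpr hp
    have hlen : (lpow p k).length = (k + 1) * p.length := lpow_length p k
    have hmod : (n - l.length) % (lpow p k).length < (lpow p k).length := by
      apply Nat.mod_lt; rw [hlen]; positivity
    rw [getD_lpow p hp k _ hmod]
    congr 1
    rw [hlen, Nat.mod_mod_of_dvd _ ⟨k + 1, by ring⟩]

/- ====================  extracting lists from ev-equality  ==================== -/

lemma prefix_eq_of_ev (l1 p1 l2 p2 : List I) (hl : l1.length = l2.length)
    (h : ev l1 p1 = ev l2 p2) : l1 = l2 := by
  apply List.ext_getElem hl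
  intro i h1 h2
  have := congrFun h i
  unfold ev at this
  rw [if_pos h1, if_pos (hl ▸ h1), List.getD_eq_getElem _ _ h1,
    List.getD_eq_getElem _ _ h2] at this
  exact this

lemma period_eq_of_ev (l1 p1 l2 p2 : List I) (hl : l1.length = l2.length)
    (hp : p1.length = p2.length) (h : ev l1 p1 = ev l2 p2) : p1 = p2 := by
  apply List.ext_getElem hp
  intro j h1 h2
  have := congrFun h (l1.length + j)
  unfold ev at this
  rw [if_neg (by omega), if_neg (by omega), Nat.add_sub_cancel_left, hl,
    Nat.add_sub_cancel_left] at this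
  rw [Nat.mod_eq_of_lt h1, Nat.mod_eq_of_lt h2] at this
  rw [List.getD_eq_getElem _ _ h1, List.getD_eq_getElem _ _ h2] at this
  exact this

/- ====================  shifting to a given prefix length  ==================== -/

lemma shiftN (k : ℕ) (l p : List I) (hp : p ≠ []) :
    ∃ l' p', p' ≠ [] ∧ l'.length = l.length + k ∧ p'.length = p.length ∧
      PGA.Eq (trm l p) (trm l' p') ∧ ev l p = ev l' p' := by
  induction k generalizing l p with
  | zero => exact ⟨l, p, hp, by omega, rfl, .refl _, rfl⟩
  | succ k ih =>
    obtain ⟨a, q, rfl⟩ : ∃ a q, p = a :: q := by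
      cases p with
      | nil => simp at hp
      | cons a q => exact ⟨a, q, rfl⟩
    obtain ⟨l', p', h1, h2, h3, h4, h5⟩ := ih (l ++ [a]) (q ++ [a]) (by simp)
    refine ⟨l', p', h1, by simp at h2; omega, by simp at h3 ⊢; omega,
      .trans (trm_shift l a q) h4, ?_⟩
    rw [ev_shift l a q, h5]

/- ====================  key lemma  ==================== -/

lemma key (l1 p1 l2 p2 : List I) (hp1 : p1 ≠ []) (hp2 : p2 ≠ [])
    (h : ev l1 p1 = ev l2 p2) : PGA.Eq (trm l1 p1) (trm l2 p2) := by
  set L := max l1.length l2.length with hL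
  obtain ⟨l1', q1, hq1, hl1, hpl1, he1, hev1⟩ :=
    shiftN (L - l1.length) l1 p1 hp1
  obtain ⟨l2', q2, hq2, hl2, hpl2, he2, hev2⟩ :=
    shiftN (L - l2.length) l2 p2 hp2
  have hlen : l1'.length = l2'.length := by omega
  have hev : ev l1' q1 = ev l2' q2 := by rw [← hev1, ← hev2, h]
  -- pump periods to common length q1.length * q2.length
  have hq1p : 0 < q1.length := List.length_pos_iff.mpr hq1
  have hq2p : 0 < q2.length := List.length_pos_iff.mpr hq2
  have hev1' : ev l1' (lpow q1 (q2.length - 1)) = ev l2' (lpow q2 (q1.length - 1)) := by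
    rw [ev_lpow _ _ hq1, ev_lpow _ _ hq2, hev]
  have hplen : (lpow q1 (q2.length - 1)).length = (lpow q2 (q1.length - 1)).length := by
    rw [lpow_length, lpow_length]
    have : q2.length - 1 + 1 = q2.length := by omega
    rw [this]
    have : q1.length - 1 + 1 = q1.length := by omega
    rw [this]
    ring
  have hpre : l1' = l2' := prefix_eq_of_ev _ _ _ _ hlen hev1'
  have hper : lpow q1 (q2.length - 1) = lpow q2 (q1.length - 1) :=
    period_eq_of_ev l1' _ l2' _ hlen hplen hev1'
  exact .trans he1 (.trans (.symm (trm_pump l1' q1 hq1 (q2.length - 1)))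
    (.trans (by rw [hpre, hper]; exact .refl _)
      (.trans (trm_pump l2' q2 hq2 (q1.length - 1)) (.symm he2))))

/- ====================  canonical forms  ==================== -/

lemma canon (x : PGA I) :
    (∃ l, l ≠ [] ∧ PGA.Eq x (ofL l) ∧ x.den = Sum.inl l) ∨
    (∃ l p, p ≠ [] ∧ PGA.Eq x (trm l p) ∧ x.den = Sum.inr (ev l p)) := by
  induction x with
  | instr u => exact Or.inl ⟨[u], by simp, .refl _, rfl⟩
  | concat P Q ihP ihQ =>
    rcases ihP with ⟨l1, h1, e1, d1⟩ | ⟨l1, p1, h1, e1, d1⟩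
    · rcases ihQ with ⟨l2, h2, e2, d2⟩ | ⟨l2, p2, h2, e2, d2⟩
      · left
        refine ⟨l1 ++ l2, by simp [h1], ?_, ?_⟩
        · exact .trans (.concat_congr e1 e2) (.symm (ofL_append l1 l2 h1 h2))
        · simp only [PGA.den]
          rw [d1, d2]
      · right
        refine ⟨l1 ++ l2, p2, h2, ?_, ?_⟩
        · exact .trans (.concat_congr e1 e2) (trm_prepend l1 l2 p2 h1)
        · simp only [PGA.den]
          rw [d1, d2]
          exact congrArg Sum.inr
            (funext fun n => ev_append l1 l2 p2 (ev l2 p2 0) n)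
    · right
      refine ⟨l1, p1, h1,
        .trans (.concat_congr e1 (.refl Q)) (trm_absorb l1 p1 Q), ?_⟩
      simp only [PGA.den]
      rw [d1]
  | rep P ihP =>
    rcases ihP with ⟨l, h1, e1, d1⟩ | ⟨l, p, h1, e1, d1⟩
    · right
      obtain ⟨a, l', rfl⟩ : ∃ a l', l = a :: l' := by
        cases l with
        | nil => simp at h1
        | cons a t => exact ⟨a, t, rfl⟩
      refine ⟨[], a :: l', by simp, .rep_congr e1, ?_⟩
      simp only [PGA.den]
      rw [d1]
      have hpt : ∀ n, (a :: l').getD (n % (a :: l').length) a = ev [] (a :: l') n := by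
        intro n
        unfold ev
        simp only [List.length_nil, Nat.not_lt_zero, if_false, Nat.sub_zero]
        exact getD_irrel _ a default (Nat.mod_lt _ (by simp))
      exact congrArg Sum.inr (funext hpt)
    · right
      refine ⟨l, p, h1, .trans (.rep_congr e1) (rep_trm l p), ?_⟩
      simp only [PGA.den]
      rw [d1]

end PGACompl

instance {B : Type} : Inhabited (PrimInstr B) := ⟨.halt⟩


/-- Completeness of the PGA axioms for instruction sequence
equivalence: if two closed PGA terms denote the same instruction sequence,
then they are derivably equal from PGA1–PGA4. -/
theorem pga_completeness (B : Type) (x y : PGA (PrimInstr B)) :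
    x.den = y.den → PGA.Eq x y := by
  intro h
  rcases PGACompl.canon x with ⟨l1, h1, e1, d1⟩ | ⟨l1, p1, h1, e1, d1⟩ <;>
    rcases PGACompl.canon y with ⟨l2, h2, e2, d2⟩ | ⟨l2, p2, h2, e2, d2⟩ <;>
      rw [d1, d2] at h
  · obtain rfl : l1 = l2 := Sum.inl.inj h
    exact .trans e1 (.symm e2)
  · simp at h
  · simp at h
  · have hev : PGACompl.ev l1 p1 = PGACompl.ev l2 p2 := Sum.inr.inj h
    exact .trans e1 (.trans (PGACompl.key l1 p1 l2 p2 h1 h2 hev) (.symm e2))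
end
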